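/- Let α > 0, let (u₁,…,u_n) ∈ (0,∞)ⁿ be a positive solution of the discrete system (Sα), and let C > 0 be any upper bound of u_n (i.e. u_n ≤ C). If the function g := g₁/g₂ is a strictly increasing bijection of (0,∞) onto (0,∞), then u₁ > g⁻¹(α)/e^M, where M := g₁′(C). -/

import Mathlib

noncomputable section

/-- `Useq g1 h k` is the function `U_{k+1}` (0-indexed version of the recursion). -/
def Useq (g1 : ℝ → ℝ) (h : ℝ) : ℕ → ℝ → ℝ
  | 0 => fun x => x
  | 1 => fun x => x + h ^ 2 / 2 * g1 x
  | k + 2 => fun x =>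
      2 * Useq g1 h (k + 1) x - Useq g1 h k x + h ^ 2 * g1 (Useq g1 h (k + 1) x)

/-- `discU g1 h k` is the function `U_k` from the paper, for `1 ≤ k`. -/
def discU (g1 : ℝ → ℝ) (h : ℝ) (k : ℕ) : ℝ → ℝ := Useq g1 h (k - 1)

/-- The function `A(u₁)` from the paper. -/
def discA (g1 g2 : ℝ → ℝ) (h : ℝ) (n : ℕ) (x : ℝ) : ℝ :=
  ((discU g1 h n x - discU g1 h (n - 1) x) / h + h / 2 * g1 (discU g1 h n x)) /
    g2 (discU g1 h n x)

/-- `(u₁, …, u_n)` (encoded as `u : ℕ → ℝ` on indices `1,…,n`) is a positive solution of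
the discrete system `(Sα)`. -/
def IsSolution (g1 g2 : ℝ → ℝ) (n : ℕ) (h α : ℝ) (u : ℕ → ℝ) : Prop :=
  (∀ k, 1 ≤ k → k ≤ n → 0 < u k) ∧
  u 2 - u 1 = h ^ 2 / 2 * g1 (u 1) ∧
  (∀ k, 2 ≤ k → k ≤ n - 1 → u (k + 1) - 2 * u k + u (k - 1) = h ^ 2 * g1 (u k)) ∧
  u n - u (n - 1) = -(h ^ 2 / 2) * g1 (u n) + h * α * g2 (u n)

/-- `G₁`, the primitive of `g₁` vanishing at `0`. -/
def primG1 (g1 : ℝ → ℝ) (x : ℝ) : ℝ := ∫ t in (0:ℝ)..x, g1 t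

/-- `g := g₁/g₂`. -/
def gg (g1 g2 : ℝ → ℝ) (x : ℝ) : ℝ := g1 x / g2 x

/-- `G := G₁/g₂²`. -/
def GG (g1 g2 : ℝ → ℝ) (x : ℝ) : ℝ := primG1 g1 x / (g2 x) ^ 2

/-- The trapezoidal-rule error `E` as a function of `u₁`. -/
def trapError (g1 : ℝ → ℝ) (h : ℝ) (n : ℕ) (x : ℝ) : ℝ :=
  (∑ k ∈ Finset.Icc 1 (n - 1),
    (g1 (discU g1 h k x) + g1 (discU g1 h (k + 1) x)) / 2 *
      (discU g1 h (k + 1) x - discU g1 h k x)) -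
  (primG1 g1 (discU g1 h n x) - primG1 g1 (discU g1 h 1 x))

/-- The Jacobian matrix `J(α,u)` of the system `(Sα)`. -/
def Jmat (g1 g2 : ℝ → ℝ) (n : ℕ) (h α : ℝ) (u : ℕ → ℝ) : Matrix (Fin n) (Fin n) ℝ :=
  Matrix.of fun i j =>
    if i = j then
      (if (i : ℕ) = 0 then 1 + h ^ 2 / 2 * deriv g1 (u 1)
       else if (i : ℕ) = n - 1 then
         1 + h ^ 2 / 2 * deriv g1 (u n) - h * α * deriv g2 (u n)
       else 2 + h ^ 2 * deriv g1 (u ((i : ℕ) + 1)))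
    else if (i : ℕ) + 1 = (j : ℕ) ∨ (j : ℕ) + 1 = (i : ℕ) then -1 else 0


/-!
The increments `d k = u (k + 1) - u k` satisfy `d 1 = h² g₁(u₁)/2` and `d k = d (k - 1) + h² g₁(u k)`:
they are trapezoidal sums of the increasing values `g₁(u j)`, hence positive and bounded by
`h² (k - 1/2) g₁(u k)`. Convexity of `g₁` and `g₁ 0 = 0` give `g₁ x ≤ M x` on `[0, C]`, so
`u (k + 1) ≤ (1 + h M) u k` and `u n ≤ (1 + M/(n-1))^(n-1) u₁ ≤ e^M u₁`. At the last node the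
trapezoidal bound is strict; inserted into the boundary condition it gives `α g₂(u n) < g₁(u n)`,
i.e. `g⁻¹(α) < u n`.
-/

open Set Real

lemma strictMonoOn_Ici_of_deriv_pos {f : ℝ → ℝ} (hf : Continuous f)
    (hd : ∀ x > (0:ℝ), 0 < deriv f x) : StrictMonoOn f (Ici 0) :=
  strictMonoOn_of_deriv_pos (convex_Ici 0) hf.continuousOn fun x hx ↦
    hd x (by rwa [interior_Ici] at hx)

lemma pos_of_deriv_pos {f : ℝ → ℝ} (hf : Continuous f) (h0 : f 0 = 0)
    (hd : ∀ x > (0:ℝ), 0 < deriv f x) {x : ℝ} (hx : 0 < x) : 0 < f x := by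
  simpa [h0] using strictMonoOn_Ici_of_deriv_pos hf hd self_mem_Ici hx.le hx

lemma le_deriv_mul_of_monotoneOn_deriv {f : ℝ → ℝ} (hf : Differentiable ℝ f) (h0 : f 0 = 0)
    (hmono : MonotoneOn (deriv f) (Ici 0)) {x C : ℝ} (hx : 0 ≤ x) (hxC : x ≤ C) :
    f x ≤ deriv f C * x := by
  rcases hx.eq_or_lt with rfl | hx
  · simp [h0]
  obtain ⟨c, hc, hslope⟩ :=
    exists_deriv_eq_slope f hx hf.continuous.continuousOn hf.differentiableOn
  have hcC : deriv f c ≤ deriv f C := hmono hc.1.le (hx.trans_le hxC).le (hc.2.le.trans hxC)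
  rwa [hslope, h0, sub_zero, sub_zero, div_le_iff₀ hx] at hcC

namespace DiscreteSystem

variable {f : ℝ → ℝ} {n : ℕ} {h : ℝ} {u : ℕ → ℝ}

lemma increment_succ
    (hrec : ∀ k, 2 ≤ k → k ≤ n - 1 → u (k + 1) - 2 * u k + u (k - 1) = h ^ 2 * f (u k))
    {k : ℕ} (hk : 1 ≤ k) (hkn : k + 1 ≤ n - 1) :
    u (k + 1 + 1) - u (k + 1) = u (k + 1) - u k + h ^ 2 * f (u (k + 1)) := by
  have := hrec (k + 1) (by omega) hkn
  rw [Nat.add_sub_cancel] at this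
  linarith

lemma increment_pos (hh : h ≠ 0) (hf : ∀ x, 0 < x → 0 < f x)
    (hpos : ∀ k, 1 ≤ k → k ≤ n → 0 < u k) (hstart : u 2 - u 1 = h ^ 2 / 2 * f (u 1))
    (hrec : ∀ k, 2 ≤ k → k ≤ n - 1 → u (k + 1) - 2 * u k + u (k - 1) = h ^ 2 * f (u k)) :
    ∀ k, 1 ≤ k → k ≤ n - 1 → 0 < u (k + 1) - u k := by
  intro k hk
  induction k, hk using Nat.le_induction with
  | base =>
    intro _
    rw [hstart]
    exact mul_pos (by positivity) (hf _ (hpos 1 le_rfl (by omega)))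
  | succ k hk ih =>
    intro hkn
    rw [increment_succ hrec hk hkn]
    exact add_pos (ih (by omega)) (mul_pos (by positivity) (hf _ (hpos _ (by omega) (by omega))))

lemma le_of_increment_nonneg (hinc : ∀ k, 1 ≤ k → k ≤ n - 1 → 0 ≤ u (k + 1) - u k)
    {j k : ℕ} (hj : 1 ≤ j) (hjk : j ≤ k) (hk : k ≤ n) : u j ≤ u k := by
  induction k, hjk using Nat.le_induction with
  | base => exact le_rfl
  | succ k hjk ih => linarith [ih (by omega), hinc k (by omega) (by omega)]

lemma increment_le (hf : MonotoneOn f (Ioi 0)) (hpos : ∀ k, 1 ≤ k → k ≤ n → 0 < u k)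
    (hstart : u 2 - u 1 = h ^ 2 / 2 * f (u 1))
    (hrec : ∀ k, 2 ≤ k → k ≤ n - 1 → u (k + 1) - 2 * u k + u (k - 1) = h ^ 2 * f (u k))
    (hinc : ∀ k, 1 ≤ k → k ≤ n - 1 → 0 ≤ u (k + 1) - u k) :
    ∀ k, 1 ≤ k → k ≤ n - 1 → u (k + 1) - u k ≤ h ^ 2 * ((k : ℝ) - 1 / 2) * f (u k) := by
  intro k hk
  induction k, hk using Nat.le_induction with
  | base =>
    intro _
    rw [hstart]
    push_cast
    exact le_of_eq (by ring)
  | succ k hk ih =>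
    intro hkn
    have hfk : f (u k) ≤ f (u (k + 1)) :=
      hf (hpos k hk (by omega)) (hpos (k + 1) (by omega) (by omega))
        (by linarith [hinc k hk (by omega)])
    have hcoef : 0 ≤ h ^ 2 * ((k : ℝ) - 1 / 2) := by
      have : (1 : ℝ) ≤ k := by exact_mod_cast hk
      exact mul_nonneg (sq_nonneg h) (by linarith)
    have := mul_le_mul_of_nonneg_left hfk hcoef
    rw [increment_succ hrec hk hkn]
    push_cast
    linarith [ih (by omega)]

lemma last_le_exp_mul_first (hn : 2 ≤ n) (hh : 0 < h) (hhn : h * ((n - 1 : ℕ) : ℝ) = 1)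
    (hfpos : ∀ x, 0 < x → 0 < f x) (hfmono : MonotoneOn f (Ioi 0)) {M : ℝ} (hM : 0 ≤ M)
    (hfM : ∀ x, 0 < x → x ≤ u n → f x ≤ M * x) (hpos : ∀ k, 1 ≤ k → k ≤ n → 0 < u k)
    (hstart : u 2 - u 1 = h ^ 2 / 2 * f (u 1))
    (hrec : ∀ k, 2 ≤ k → k ≤ n - 1 → u (k + 1) - 2 * u k + u (k - 1) = h ^ 2 * f (u k)) :
    u n ≤ u 1 * exp M := by
  have hinc k hk hkn := (increment_pos hh.ne' hfpos hpos hstart hrec k hk hkn).le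
  have hstep : ∀ k < n - 1, u (k + 1 + 1) ≤ (1 + M / (n - 1 : ℕ)) * u (k + 1) := by
    intro k hk
    have hd := increment_le hfmono hpos hstart hrec hinc (k + 1) (by omega) (by omega)
    have huk := hpos (k + 1) (by omega) (by omega)
    have hfk := hfM _ huk (le_of_increment_nonneg hinc (by omega) (by omega) le_rfl)
    have hkn : ((k + 1 : ℕ) : ℝ) ≤ (n - 1 : ℕ) := by exact_mod_cast hk
    have hcoef : h * ((k + 1 : ℕ) - 1 / 2 : ℝ) ≤ 1 :=
      calc h * ((k + 1 : ℕ) - 1 / 2 : ℝ) ≤ h * (n - 1 : ℕ) := by gcongr; linarith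
        _ = 1 := hhn
    have hMh : M / (n - 1 : ℕ) = h * M := by
      rw [div_eq_iff (by intro h0; simp [h0] at hhn)]
      linear_combination (-M) * hhn
    have hgrowth : h ^ 2 * ((k + 1 : ℕ) - 1 / 2 : ℝ) * f (u (k + 1)) ≤ h * M * u (k + 1) :=
      calc h ^ 2 * ((k + 1 : ℕ) - 1 / 2 : ℝ) * f (u (k + 1))
          = h * (h * ((k + 1 : ℕ) - 1 / 2 : ℝ)) * f (u (k + 1)) := by ring
        _ ≤ h * 1 * (M * u (k + 1)) := by gcongr; exact (hfpos _ huk).le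
        _ = h * M * u (k + 1) := by ring
    rw [hMh]
    linarith
  have hgeom := le_geom (u := fun k ↦ u (k + 1)) (by positivity) (n - 1) hstep
  rw [Nat.sub_add_cancel (by omega)] at hgeom
  have hexp : (1 + M / (n - 1 : ℕ)) ^ (n - 1) ≤ exp M := by
    simpa only [neg_div, sub_neg_eq_add, neg_neg] using
      one_sub_div_pow_le_exp_neg (n := n - 1) (t := -M) (by linarith)
  calc u n ≤ (1 + M / (n - 1 : ℕ)) ^ (n - 1) * u 1 := hgeom
    _ ≤ u 1 * exp M := by
      rw [mul_comm]; exact mul_le_mul_of_nonneg_left hexp (hpos 1 le_rfl (by omega)).le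

lemma lt_gg_of_isSolution {g₂ : ℝ → ℝ} {α : ℝ} (hn : 2 ≤ n) (hh : 0 < h)
    (hhn : h * ((n - 1 : ℕ) : ℝ) = 1) (hfpos : ∀ x, 0 < x → 0 < f x)
    (hfmono : StrictMonoOn f (Ioi 0)) (hg₂ : 0 < g₂ (u n)) (hu : IsSolution f g₂ n h α u) :
    α < gg f g₂ (u n) := by
  obtain ⟨hpos, hstart, hrec, hlast⟩ := hu
  have hinc := increment_pos hh.ne' hfpos hpos hstart hrec
  have hd := increment_le hfmono.monotoneOn hpos hstart hrec (fun k hk hkn ↦ (hinc k hk hkn).le)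
    (n - 1) (by omega) le_rfl
  have hlast_inc := hinc (n - 1) (by omega) le_rfl
  rw [Nat.sub_add_cancel (by omega)] at hd hlast_inc
  have hlt : f (u (n - 1)) < f (u n) :=
    hfmono (hpos _ (by omega) (by omega)) (hpos n (by omega) le_rfl) (by linarith)
  have hcoef : 0 < h ^ 2 * ((n - 1 : ℕ) - 1 / 2 : ℝ) := by
    have : (1 : ℝ) ≤ (n - 1 : ℕ) := by exact_mod_cast (by omega : 1 ≤ n - 1)
    exact mul_pos (by positivity) (by linarith)
  have hstrict := hd.trans_lt (mul_lt_mul_of_pos_left hlt hcoef)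
  have hmesh : h ^ 2 * ((n - 1 : ℕ) - 1 / 2 : ℝ) = h - h ^ 2 / 2 := by
    linear_combination h * hhn
  rw [hmesh, hlast] at hstrict
  rw [gg, lt_div_iff₀ hg₂]
  exact lt_of_mul_lt_mul_left (by linarith) hh.le

end DiscreteSystem

theorem stmt_8_general (n : ℕ) (hn : 2 ≤ n) (h : ℝ) (hh : h = 1 / ((n : ℝ) - 1))
    (g1 g2 : ℝ → ℝ)
    (hg1C : ContDiff ℝ 3 g1) (hg2C : ContDiff ℝ 3 g2)
    (hg10 : g1 0 = 0) (hg20 : g2 0 = 0)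
    (hg1d : ∀ x > (0:ℝ), 0 < deriv g1 x) (hg2d : ∀ x > (0:ℝ), 0 < deriv g2 x)
    (hg1dd : ∀ x > (0:ℝ), 0 < deriv (deriv g1) x)
    (α : ℝ) (hα : 0 < α) (u : ℕ → ℝ) (hu : IsSolution g1 g2 n h α u)
    (C : ℝ) (hunC : u n ≤ C)
    (hgmono : StrictMonoOn (gg g1 g2) (Set.Ioi 0))
    (ginv : ℝ → ℝ)
    (hginv : ∀ y ∈ Set.Ioi (0:ℝ), ginv y ∈ Set.Ioi 0 ∧ gg g1 g2 (ginv y) = y) :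
    ginv α / Real.exp (deriv g1 C) < u 1 := by
  have hun : 0 < u n := hu.1 n (by omega) le_rfl
  have hh0 : 0 < h := by
    rw [hh, ← Nat.cast_pred (by omega)]; exact one_div_pos.mpr (by norm_cast; omega)
  have hhn : h * ((n - 1 : ℕ) : ℝ) = 1 := by
    rw [hh, ← Nat.cast_pred (by omega)]; exact one_div_mul_cancel (by norm_cast; omega)
  have hg1pos x (hx : 0 < x) : 0 < g1 x := pos_of_deriv_pos hg1C.continuous hg10 hg1d hx
  have hg1mono := (strictMonoOn_Ici_of_deriv_pos hg1C.continuous hg1d).mono Ioi_subset_Ici_self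
  have hdg1mono := strictMonoOn_Ici_of_deriv_pos (hg1C.continuous_deriv (by norm_num)) hg1dd
  have hα_lt : gg g1 g2 (ginv α) < gg g1 g2 (u n) := by
    rw [(hginv α hα).2]
    exact DiscreteSystem.lt_gg_of_isSolution hn hh0 hhn hg1pos hg1mono
      (pos_of_deriv_pos hg2C.continuous hg20 hg2d hun) hu
  have hginv_lt : ginv α < u n := hgmono.lt_iff_lt (hginv α hα).1 hun |>.mp hα_lt
  have hgrowth : u n ≤ u 1 * exp (deriv g1 C) :=
    DiscreteSystem.last_le_exp_mul_first hn hh0 hhn hg1pos hg1mono.monotoneOn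
      (hg1d C (hun.trans_le hunC)).le
      (fun x hx hxn ↦ le_deriv_mul_of_monotoneOn_deriv (hg1C.differentiable (by norm_num)) hg10
        hdg1mono.monotoneOn hx.le (hxn.trans hunC)) hu.1 hu.2.1 hu.2.2.1
  rw [div_lt_iff₀ (exp_pos _)]
  linarith

theorem stmt_8 (n : ℕ) (hn : 2 ≤ n) (h : ℝ) (hh : h = 1 / ((n : ℝ) - 1))
    (g1 g2 : ℝ → ℝ)
    (hg1C : ContDiff ℝ 3 g1) (hg2C : ContDiff ℝ 3 g2)
    (hg10 : g1 0 = 0) (hg20 : g2 0 = 0)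
    (hg1d : ∀ x > (0:ℝ), 0 < deriv g1 x) (hg2d : ∀ x > (0:ℝ), 0 < deriv g2 x)
    (hg1dd : ∀ x > (0:ℝ), 0 < deriv (deriv g1) x)
    (hg2dd : ∀ x > (0:ℝ), 0 < deriv (deriv g2) x)
    (hg1ddd : ∀ x > (0:ℝ), 0 ≤ deriv (deriv (deriv g1)) x)
    (hg2ddd : ∀ x > (0:ℝ), 0 ≤ deriv (deriv (deriv g2)) x)
    (α : ℝ) (hα : 0 < α) (u : ℕ → ℝ) (hu : IsSolution g1 g2 n h α u)
    (C : ℝ) (hC : 0 < C) (hunC : u n ≤ C)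
    (hgmono : StrictMonoOn (gg g1 g2) (Set.Ioi 0))
    (hgbij : Set.BijOn (gg g1 g2) (Set.Ioi 0) (Set.Ioi 0))
    (ginv : ℝ → ℝ)
    (hginv : ∀ y ∈ Set.Ioi (0:ℝ), ginv y ∈ Set.Ioi 0 ∧ gg g1 g2 (ginv y) = y) :
    ginv α / Real.exp (deriv g1 C) < u 1 :=
  stmt_8_general n hn h hh g1 g2 hg1C hg2C hg10 hg20 hg1d hg2d hg1dd α hα u hu C hunC hgmono ginv
    hginv
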